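/- The first variation of the unit normal is tangential and given by the infinitesimal rotations: at every point of U, d/dt at t=0 of N(t) := (R(t)_α × R(t)_β)/‖R(t)_α × R(t)_β‖ equals ϑ̄·e₁ + ψ̄·e₂, where ϑ̄ = (−(v_n)_α + H∘ v₁)/A₁ and ψ̄ = (−(v_n)_β + K∘ v₂)/A₂. -/

import Mathlib

noncomputable section

/-- Vectors in ℝ³. -/
abbrev V3 : Type := Fin 3 → ℝ

/-- Euclidean dot product on ℝ³. -/
def dot3 (a b : V3) : ℝ := a 0 * b 0 + a 1 * b 1 + a 2 * b 2

/-- Cross product on ℝ³. -/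
def cross3 (a b : V3) : V3 :=
  ![a 1 * b 2 - a 2 * b 1, a 2 * b 0 - a 0 * b 2, a 0 * b 1 - a 1 * b 0]

/-- Euclidean norm on ℝ³. -/
def norm3 (a : V3) : ℝ := Real.sqrt (dot3 a a)

/-- Partial derivative in the first (α) direction. -/
def pd1 {E : Type*} [NormedAddCommGroup E] [NormedSpace ℝ E]
    (f : ℝ × ℝ → E) (x : ℝ × ℝ) : E := fderiv ℝ f x (1, 0)

/-- Partial derivative in the second (β) direction. -/
def pd2 {E : Type*} [NormedAddCommGroup E] [NormedSpace ℝ E]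
    (f : ℝ × ℝ → E) (x : ℝ × ℝ) : E := fderiv ℝ f x (0, 1)

def A₁ (r : ℝ × ℝ → V3) (x : ℝ × ℝ) : ℝ := norm3 (pd1 r x)
def A₂ (r : ℝ × ℝ → V3) (x : ℝ × ℝ) : ℝ := norm3 (pd2 r x)
def e₁ (r : ℝ × ℝ → V3) (x : ℝ × ℝ) : V3 := (A₁ r x)⁻¹ • pd1 r x
def e₂ (r : ℝ × ℝ → V3) (x : ℝ × ℝ) : V3 := (A₂ r x)⁻¹ • pd2 r x
/-- Unit normal N = e₁ × e₂. -/
def NN (r : ℝ × ℝ → V3) (x : ℝ × ℝ) : V3 := cross3 (e₁ r x) (e₂ r x)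
/-- p = (A₁)_β / A₂. -/
def pp (r : ℝ × ℝ → V3) (x : ℝ × ℝ) : ℝ := pd2 (A₁ r) x / A₂ r x
/-- q = (A₂)_α / A₁. -/
def qq (r : ℝ × ℝ → V3) (x : ℝ × ℝ) : ℝ := pd1 (A₂ r) x / A₁ r x
/-- H∘ = −κ₁ A₁. -/
def Ho (r : ℝ × ℝ → V3) (κ₁ : ℝ × ℝ → ℝ) (x : ℝ × ℝ) : ℝ := -κ₁ x * A₁ r x
/-- K∘ = −κ₂ A₂. -/
def Ko (r : ℝ × ℝ → V3) (κ₂ : ℝ × ℝ → ℝ) (x : ℝ × ℝ) : ℝ := -κ₂ x * A₂ r x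

/-- Surface divergence of the tangential field f₁·e₁ + f₂·e₂. -/
def sdiv (r : ℝ × ℝ → V3) (f₁ f₂ : ℝ × ℝ → ℝ) (x : ℝ × ℝ) : ℝ :=
  (pd1 (fun y => f₁ y * A₂ r y) x + pd2 (fun y => f₂ y * A₁ r y) x) / (A₁ r x * A₂ r x)

/-- Surface gradient ∇f = (f_α/A₁)·e₁ + (f_β/A₂)·e₂. -/
def sgrad (r : ℝ × ℝ → V3) (f : ℝ × ℝ → ℝ) (x : ℝ × ℝ) : V3 :=
  (pd1 f x / A₁ r x) • e₁ r x + (pd2 f x / A₂ r x) • e₂ r x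


/-- Variation vector field V = v₁·e₁ + v₂·e₂ + v_n·N. -/
def Vfield (r : ℝ × ℝ → V3) (v₁ v₂ v_n : ℝ × ℝ → ℝ) (y : ℝ × ℝ) : V3 :=
  v₁ y • e₁ r y + v₂ y • e₂ r y + v_n y • NN r y

/-- The deformed surface R(t) = r + t·V. -/
def Rt (r Vf : ℝ × ℝ → V3) (t : ℝ) (y : ℝ × ℝ) : V3 := r y + t • Vf y

/-- Infinitesimal strain ε̄₁ = ((v₁)_α + p v₂ + H∘ v_n)/A₁. -/
def eps1 (r : ℝ × ℝ → V3) (κ₁ : ℝ × ℝ → ℝ) (v₁ v₂ v_n : ℝ × ℝ → ℝ) (x : ℝ × ℝ) : ℝ :=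
  (pd1 v₁ x + pp r x * v₂ x + Ho r κ₁ x * v_n x) / A₁ r x

/-- Infinitesimal strain ε̄₂ = ((v₂)_β + q v₁ + K∘ v_n)/A₂. -/
def eps2 (r : ℝ × ℝ → V3) (κ₂ : ℝ × ℝ → ℝ) (v₁ v₂ v_n : ℝ × ℝ → ℝ) (x : ℝ × ℝ) : ℝ :=
  (pd2 v₂ x + qq r x * v₁ x + Ko r κ₂ x * v_n x) / A₂ r x

/-- Infinitesimal rotation ϑ̄ = (−(v_n)_α + H∘ v₁)/A₁. -/
def thb (r : ℝ × ℝ → V3) (κ₁ : ℝ × ℝ → ℝ) (v₁ v_n : ℝ × ℝ → ℝ) (x : ℝ × ℝ) : ℝ :=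
  (-(pd1 v_n x) + Ho r κ₁ x * v₁ x) / A₁ r x

/-- Infinitesimal rotation ψ̄ = (−(v_n)_β + K∘ v₂)/A₂. -/
def psb (r : ℝ × ℝ → V3) (κ₂ : ℝ × ℝ → ℝ) (v₂ v_n : ℝ × ℝ → ℝ) (x : ℝ × ℝ) : ℝ :=
  (-(pd2 v_n x) + Ko r κ₂ x * v₂ x) / A₂ r x

/-- Shear ω₁ = (v_α − p u)/A₁. -/
def om1 (r : ℝ × ℝ → V3) (u v : ℝ × ℝ → ℝ) (x : ℝ × ℝ) : ℝ :=
  (pd1 v x - pp r x * u x) / A₁ r x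

/-- Shear ω₂ = (u_β − q v)/A₂. -/
def om2 (r : ℝ × ℝ → V3) (u v : ℝ × ℝ → ℝ) (x : ℝ × ℝ) : ℝ :=
  (pd2 u x - qq r x * v x) / A₂ r x

/-- First fundamental form coefficient E. -/
def EE (R : ℝ × ℝ → V3) (x : ℝ × ℝ) : ℝ := dot3 (pd1 R x) (pd1 R x)
/-- First fundamental form coefficient F. -/
def FF (R : ℝ × ℝ → V3) (x : ℝ × ℝ) : ℝ := dot3 (pd1 R x) (pd2 R x)
/-- First fundamental form coefficient G. -/
def GG (R : ℝ × ℝ → V3) (x : ℝ × ℝ) : ℝ := dot3 (pd2 R x) (pd2 R x)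
/-- Unit normal of a parametrized surface. -/
def unitN (R : ℝ × ℝ → V3) (x : ℝ × ℝ) : V3 :=
  (norm3 (cross3 (pd1 R x) (pd2 R x)))⁻¹ • cross3 (pd1 R x) (pd2 R x)
/-- Second fundamental form coefficient e = N·R_αα. -/
def ee (R : ℝ × ℝ → V3) (x : ℝ × ℝ) : ℝ := dot3 (unitN R x) (pd1 (pd1 R) x)
/-- Second fundamental form coefficient f = N·R_αβ. -/
def ff (R : ℝ × ℝ → V3) (x : ℝ × ℝ) : ℝ := dot3 (unitN R x) (pd2 (pd1 R) x)
/-- Second fundamental form coefficient g = N·R_ββ. -/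
def gg (R : ℝ × ℝ → V3) (x : ℝ × ℝ) : ℝ := dot3 (unitN R x) (pd2 (pd2 R) x)
/-- Mean curvature H = (eG − 2fF + gE)/(2(EG − F²)). -/
def meanH (R : ℝ × ℝ → V3) (x : ℝ × ℝ) : ℝ :=
  (ee R x * GG R x - 2 * ff R x * FF R x + gg R x * EE R x) /
    (2 * (EE R x * GG R x - FF R x ^ 2))
/-- κ̃₁ = −(N_α·R_α)/‖R_α‖². -/
def princ1 (R : ℝ × ℝ → V3) (x : ℝ × ℝ) : ℝ :=
  -(dot3 (pd1 (unitN R) x) (pd1 R x)) / (norm3 (pd1 R x)) ^ 2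
/-- κ̃₂ = −(N_β·R_β)/‖R_β‖². -/
def princ2 (R : ℝ × ℝ → V3) (x : ℝ × ℝ) : ℝ :=
  -(dot3 (pd2 (unitN R) x) (pd2 R x)) / (norm3 (pd2 R x)) ^ 2

/-- Linear Weingarten functional integrand (a·H + b)·dA + (c/3)·R·(R_α × R_β). -/
def Phi (a b c : ℝ) (R : ℝ × ℝ → V3) (x : ℝ × ℝ) : ℝ :=
  (a * meanH R x + b) * norm3 (cross3 (pd1 R x) (pd2 R x)) +
    c / 3 * dot3 (R x) (cross3 (pd1 R x) (pd2 R x))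

/-! ### Auxiliary lemmas -/

lemma dot3_nonneg (a : V3) : 0 ≤ dot3 a a := by
  unfold dot3; nlinarith [mul_self_nonneg (a 0), mul_self_nonneg (a 1), mul_self_nonneg (a 2)]

lemma dot3_pos_of_ne {a : V3} (h : a ≠ 0) : 0 < dot3 a a := by
  obtain ⟨i, hi⟩ := Function.ne_iff.1 h
  unfold dot3
  fin_cases i <;> simp only [Fin.zero_eta, Fin.mk_one, Fin.reduceFinMk, Pi.zero_apply] at hi <;>
    nlinarith [mul_self_pos.2 hi, mul_self_nonneg (a 0), mul_self_nonneg (a 1),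
      mul_self_nonneg (a 2)]

lemma norm3_sq {a : V3} : norm3 a ^ 2 = dot3 a a := Real.sq_sqrt (dot3_nonneg a)
lemma norm3_pos {a : V3} (h : a ≠ 0) : 0 < norm3 a := Real.sqrt_pos.2 (dot3_pos_of_ne h)

lemma dot3_smul_left (s : ℝ) (u v : V3) : dot3 (s • u) v = s * dot3 u v := by
  simp only [dot3, Pi.smul_apply, smul_eq_mul]; ring

lemma dot3_smul_right (s : ℝ) (u v : V3) : dot3 u (s • v) = s * dot3 u v := by
  simp only [dot3, Pi.smul_apply, smul_eq_mul]; ring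

lemma dot3_cross_self (u v : V3) :
    dot3 (cross3 u v) (cross3 u v) = dot3 u u * dot3 v v - dot3 u v ^ 2 := by
  simp only [dot3, cross3, Matrix.cons_val_zero, Matrix.cons_val_one, Matrix.head_cons,
    Matrix.cons_val_two, Matrix.tail_cons]
  ring

lemma cross3_smul_smul (s t : ℝ) (u v : V3) :
    cross3 (s • u) (t • v) = (s * t) • cross3 u v := by
  funext i
  fin_cases i <;>
    simp only [Fin.zero_eta, Fin.mk_one, Fin.reduceFinMk, cross3, Pi.smul_apply, smul_eq_mul,
      Matrix.cons_val_zero, Matrix.cons_val_one, Matrix.head_cons, Matrix.cons_val_two,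
      Matrix.tail_cons] <;> ring

lemma dot3_V_cross (u v : V3) (c1 c2 c3 : ℝ) :
    dot3 (c1 • u + c2 • v + c3 • cross3 u v) (cross3 u v)
      = c3 * (dot3 u u * dot3 v v - dot3 u v ^ 2) := by
  simp only [dot3, cross3, Pi.add_apply, Pi.smul_apply, smul_eq_mul, Matrix.cons_val_zero,
    Matrix.cons_val_one, Matrix.head_cons, Matrix.cons_val_two, Matrix.tail_cons]
  ring

lemma dot3_V_a (a b : V3) (c1 c2 c3 s t : ℝ) :
    dot3 (c1 • (s • a) + c2 • (t • b) + c3 • cross3 (s • a) (t • b)) a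
      = c1 * s * dot3 a a + c2 * t * dot3 a b := by
  simp only [dot3, cross3, Pi.add_apply, Pi.smul_apply, smul_eq_mul, Matrix.cons_val_zero,
    Matrix.cons_val_one, Matrix.head_cons, Matrix.cons_val_two, Matrix.tail_cons]
  ring

lemma dot3_V_b (a b : V3) (c1 c2 c3 s t : ℝ) :
    dot3 (c1 • (s • a) + c2 • (t • b) + c3 • cross3 (s • a) (t • b)) b
      = c1 * s * dot3 a b + c2 * t * dot3 b b := by
  simp only [dot3, cross3, Pi.add_apply, Pi.smul_apply, smul_eq_mul, Matrix.cons_val_zero,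
    Matrix.cons_val_one, Matrix.head_cons, Matrix.cons_val_two, Matrix.tail_cons]
  ring

lemma key_alg (a b u w : V3) (h : dot3 a b = 0) :
    (dot3 a a * dot3 b b) • (cross3 a w + cross3 u b)
      - dot3 (cross3 a b) (cross3 a w + cross3 u b) • cross3 a b
    = (-(dot3 u (cross3 a b)) * dot3 b b) • a + (-(dot3 w (cross3 a b)) * dot3 a a) • b := by
  unfold dot3 at h
  funext i
  fin_cases i <;>
    simp only [Fin.zero_eta, Fin.mk_one, Fin.reduceFinMk, cross3, dot3, Pi.add_apply,
      Pi.sub_apply, Pi.smul_apply, smul_eq_mul,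
      Matrix.cons_val_zero, Matrix.cons_val_one, Matrix.head_cons, Matrix.cons_val_two,
      Matrix.tail_cons]
  · linear_combination (a 2 * b 2 * b 2 * u 1 - a 2 * b 1 * b 2 * u 2 - a 2 * b 0 * b 1 * u 0 + a 2 * b 0 * b 0 * u 1 - a 2 * a 2 * b 2 * w 1 + a 1 * b 1 * b 2 * u 1 - a 1 * b 1 * b 1 * u 2 + a 1 * b 0 * b 2 * u 0 - a 1 * b 0 * b 0 * u 2 + a 1 * a 2 * b 2 * w 2 - a 1 * a 2 * b 1 * w 1 + a 1 * a 1 * b 1 * w 2 - a 0 * a 2 * b 1 * w 0 + a 0 * a 1 * b 2 * w 0 - a 0 * a 0 * b 2 * w 1 + a 0 * a 0 * b 1 * w 2) * h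
  · linear_combination (- (a 2 * b 2 * b 2 * u 0) - a 2 * b 1 * b 1 * u 0 + a 2 * b 0 * b 2 * u 2 + a 2 * b 0 * b 1 * u 1 + a 2 * a 2 * b 2 * w 0 + a 1 * a 2 * b 0 * w 1 + a 1 * a 1 * b 2 * w 0 - a 1 * a 1 * b 0 * w 2 - a 0 * b 1 * b 2 * u 1 + a 0 * b 1 * b 1 * u 2 - a 0 * b 0 * b 2 * u 0 + a 0 * b 0 * b 0 * u 2 - a 0 * a 2 * b 2 * w 2 + a 0 * a 2 * b 0 * w 0 - a 0 * a 1 * b 2 * w 1 - a 0 * a 0 * b 0 * w 2) * h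
  · linear_combination (- (a 2 * a 2 * b 1 * w 0) + a 2 * a 2 * b 0 * w 1 + a 1 * b 2 * b 2 * u 0 + a 1 * b 1 * b 1 * u 0 - a 1 * b 0 * b 2 * u 2 - a 1 * b 0 * b 1 * u 1 - a 1 * a 2 * b 0 * w 2 - a 1 * a 1 * b 1 * w 0 - a 0 * b 2 * b 2 * u 1 + a 0 * b 1 * b 2 * u 2 + a 0 * b 0 * b 1 * u 0 - a 0 * b 0 * b 0 * u 1 + a 0 * a 2 * b 1 * w 2 + a 0 * a 1 * b 1 * w 1 - a 0 * a 1 * b 0 * w 0 + a 0 * a 0 * b 0 * w 1) * h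

lemma contDiffAt_apply3 {f : ℝ × ℝ → V3} {x : ℝ × ℝ} (hf : ContDiffAt ℝ (⊤ : ℕ∞) f x) (i : Fin 3) :
    ContDiffAt ℝ (⊤ : ℕ∞) (fun y => f y i) x := contDiffAt_pi.1 hf i

lemma contDiffAt_dot3 {f g : ℝ × ℝ → V3} {x : ℝ × ℝ} (hf : ContDiffAt ℝ (⊤ : ℕ∞) f x)
    (hg : ContDiffAt ℝ (⊤ : ℕ∞) g x) : ContDiffAt ℝ (⊤ : ℕ∞) (fun y => dot3 (f y) (g y)) x := by
  unfold dot3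
  exact (((contDiffAt_apply3 hf 0).mul (contDiffAt_apply3 hg 0)).add
    ((contDiffAt_apply3 hf 1).mul (contDiffAt_apply3 hg 1))).add
    ((contDiffAt_apply3 hf 2).mul (contDiffAt_apply3 hg 2))

lemma contDiffAt_cross3 {f g : ℝ × ℝ → V3} {x : ℝ × ℝ} (hf : ContDiffAt ℝ (⊤ : ℕ∞) f x)
    (hg : ContDiffAt ℝ (⊤ : ℕ∞) g x) : ContDiffAt ℝ (⊤ : ℕ∞) (fun y => cross3 (f y) (g y)) x := by
  rw [contDiffAt_pi]
  intro i
  fin_cases i <;>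
    · simp only [Fin.zero_eta, Fin.mk_one, Fin.reduceFinMk, cross3, Matrix.cons_val_zero,
        Matrix.cons_val_one, Matrix.head_cons, Matrix.cons_val_two, Matrix.tail_cons]
      exact ((contDiffAt_apply3 hf _).mul (contDiffAt_apply3 hg _)).sub
        ((contDiffAt_apply3 hf _).mul (contDiffAt_apply3 hg _))

lemma pdv_dot3 {f g : ℝ × ℝ → V3} {x : ℝ × ℝ} (v : ℝ × ℝ) (hf : DifferentiableAt ℝ f x)
    (hg : DifferentiableAt ℝ g x) :
    fderiv ℝ (fun y => dot3 (f y) (g y)) x v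
      = dot3 (fderiv ℝ f x v) (g x) + dot3 (f x) (fderiv ℝ g x v) := by
  have hfi : ∀ i : Fin 3, DifferentiableAt ℝ (fun y => f y i) x := fun i =>
    ((ContinuousLinearMap.proj (R := ℝ) (φ := fun _ : Fin 3 => ℝ) i).differentiableAt).comp x hf
  have hgi : ∀ i : Fin 3, DifferentiableAt ℝ (fun y => g y i) x := fun i =>
    ((ContinuousLinearMap.proj (R := ℝ) (φ := fun _ : Fin 3 => ℝ) i).differentiableAt).comp x hg
  have hpdf : ∀ i : Fin 3, fderiv ℝ (fun y => f y i) x v = fderiv ℝ f x v i := by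
    intro i
    have h1 : HasFDerivAt (fun y => f y i)
        ((ContinuousLinearMap.proj (R := ℝ) (φ := fun _ : Fin 3 => ℝ) i).comp (fderiv ℝ f x)) x :=
      (ContinuousLinearMap.proj (R := ℝ) (φ := fun _ : Fin 3 => ℝ)
        i).hasFDerivAt.comp x hf.hasFDerivAt
    rw [h1.fderiv]
    rfl
  have hpdg : ∀ i : Fin 3, fderiv ℝ (fun y => g y i) x v = fderiv ℝ g x v i := by
    intro i
    have h1 : HasFDerivAt (fun y => g y i)
        ((ContinuousLinearMap.proj (R := ℝ) (φ := fun _ : Fin 3 => ℝ) i).comp (fderiv ℝ g x)) x :=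
      (ContinuousLinearMap.proj (R := ℝ) (φ := fun _ : Fin 3 => ℝ)
        i).hasFDerivAt.comp x hg.hasFDerivAt
    rw [h1.fderiv]
    rfl
  have heq : (fun y => dot3 (f y) (g y)) = fun y =>
      (fun y => f y 0) y * (fun y => g y 0) y + (fun y => f y 1) y * (fun y => g y 1) y
        + (fun y => f y 2) y * (fun y => g y 2) y := rfl
  rw [heq]
  change fderiv ℝ (((fun y => f y 0) * (fun y => g y 0) + (fun y => f y 1) * (fun y => g y 1))
    + (fun y => f y 2) * (fun y => g y 2)) x v = _
  rw [fderiv_add (((hfi 0).mul (hgi 0)).add ((hfi 1).mul (hgi 1))) ((hfi 2).mul (hgi 2)),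
    fderiv_add ((hfi 0).mul (hgi 0)) ((hfi 1).mul (hgi 1)),
    fderiv_mul (hfi 0) (hgi 0), fderiv_mul (hfi 1) (hgi 1), fderiv_mul (hfi 2) (hgi 2)]
  simp only [ContinuousLinearMap.add_apply, ContinuousLinearMap.smul_apply, smul_eq_mul]
  rw [hpdf 0, hpdf 1, hpdf 2, hpdg 0, hpdg 1, hpdg 2]
  unfold dot3
  ring

lemma hasDerivAt_unit (F : ℝ → V3) (F' : V3) (hF : HasDerivAt F F' 0)
    (h0 : dot3 (F 0) (F 0) ≠ 0) :
    HasDerivAt (fun t => (norm3 (F t))⁻¹ • F t)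
      ((norm3 (F 0))⁻¹ • F' +
        (-(dot3 (F 0) F' / norm3 (F 0)) / (norm3 (F 0)) ^ 2) • F 0) 0 := by
  have hFi : ∀ i : Fin 3, HasDerivAt (fun t => F t i) (F' i) 0 := fun i => hasDerivAt_pi.1 hF i
  have h := (((hFi 0).mul (hFi 0)).add ((hFi 1).mul (hFi 1))).add ((hFi 2).mul (hFi 2))
  have hP : HasDerivAt (fun t => dot3 (F t) (F t)) (2 * dot3 (F 0) F') 0 := by
    rw [show 2 * dot3 (F 0) F' =
      F' 0 * F 0 0 + F 0 0 * F' 0 + (F' 1 * F 0 1 + F 0 1 * F' 1) +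
        (F' 2 * F 0 2 + F 0 2 * F' 2) from by unfold dot3; ring]
    exact h
  have hsq0 := (Real.hasDerivAt_sqrt h0).comp 0 hP
  have hsq : HasDerivAt (fun t => norm3 (F t)) (dot3 (F 0) F' / norm3 (F 0)) 0 := by
    rw [show dot3 (F 0) F' / norm3 (F 0) =
      1 / (2 * Real.sqrt (dot3 (F 0) (F 0))) * (2 * dot3 (F 0) F') from by
        unfold norm3
        have hs : Real.sqrt (dot3 (F 0) (F 0)) ≠ 0 :=
          Real.sqrt_ne_zero'.2 (lt_of_le_of_ne (dot3_nonneg _) (Ne.symm h0))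
        field_simp]
    exact hsq0
  have hn : norm3 (F 0) ≠ 0 :=
    ne_of_gt (Real.sqrt_pos.2 (lt_of_le_of_ne (dot3_nonneg _) (Ne.symm h0)))
  have hinv := hsq.inv hn
  have hfin := hinv.smul hF
  convert hfin using 1
  all_goals rfl

lemma hasDerivAt_cross_aff (a b u w : V3) :
    HasDerivAt (fun t : ℝ => cross3 (a + t • u) (b + t • w)) (cross3 a w + cross3 u b) 0 := by
  have hlin : ∀ (c d : ℝ), HasDerivAt (fun t : ℝ => c + t * d) d 0 := by
    intro c d
    simpa using ((hasDerivAt_id (0 : ℝ)).mul_const d).const_add c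
  rw [hasDerivAt_pi]
  intro i
  fin_cases i
  · simp only [Fin.zero_eta, Fin.mk_one, Fin.reduceFinMk, cross3, Pi.add_apply, Pi.smul_apply,
      smul_eq_mul, Matrix.cons_val_zero, Matrix.cons_val_one, Matrix.head_cons,
      Matrix.cons_val_two, Matrix.tail_cons]
    have h := ((hlin (a 1) (u 1)).mul (hlin (b 2) (w 2))).sub
      ((hlin (a 2) (u 2)).mul (hlin (b 1) (w 1)))
    convert h using 1
    · funext t; simp only [Pi.sub_apply, Pi.mul_apply]
    ring
  · simp only [Fin.zero_eta, Fin.mk_one, Fin.reduceFinMk, cross3, Pi.add_apply, Pi.smul_apply,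
      smul_eq_mul, Matrix.cons_val_zero, Matrix.cons_val_one, Matrix.head_cons,
      Matrix.cons_val_two, Matrix.tail_cons]
    have h := ((hlin (a 2) (u 2)).mul (hlin (b 0) (w 0))).sub
      ((hlin (a 0) (u 0)).mul (hlin (b 2) (w 2)))
    convert h using 1
    · funext t; simp only [Pi.sub_apply, Pi.mul_apply]
    ring
  · simp only [Fin.zero_eta, Fin.mk_one, Fin.reduceFinMk, cross3, Pi.add_apply, Pi.smul_apply,
      smul_eq_mul, Matrix.cons_val_zero, Matrix.cons_val_one, Matrix.head_cons,
      Matrix.cons_val_two, Matrix.tail_cons]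
    have h := ((hlin (a 0) (u 0)).mul (hlin (b 1) (w 1))).sub
      ((hlin (a 1) (u 1)).mul (hlin (b 0) (w 0)))
    convert h using 1
    · funext t; simp only [Pi.sub_apply, Pi.mul_apply]
    ring

theorem stmt_9
    (U : Set (ℝ × ℝ)) (hU : IsOpen U)
    (r : ℝ × ℝ → V3) (hr : ContDiffOn ℝ (⊤ : ℕ∞) r U)
    (hne1 : ∀ x ∈ U, pd1 r x ≠ 0) (hne2 : ∀ x ∈ U, pd2 r x ≠ 0)
    (horth : ∀ x ∈ U, dot3 (pd1 r x) (pd2 r x) = 0)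
    (κ₁ κ₂ : ℝ × ℝ → ℝ) (hκ₁ : ContDiffOn ℝ (⊤ : ℕ∞) κ₁ U) (hκ₂ : ContDiffOn ℝ (⊤ : ℕ∞) κ₂ U)
    (hN1 : ∀ x ∈ U, pd1 (NN r) x = (-κ₁ x) • pd1 r x)
    (hN2 : ∀ x ∈ U, pd2 (NN r) x = (-κ₂ x) • pd2 r x)
    (v₁ v₂ v_n : ℝ × ℝ → ℝ)
    (hv₁ : ContDiffOn ℝ (⊤ : ℕ∞) v₁ U) (hv₂ : ContDiffOn ℝ (⊤ : ℕ∞) v₂ U) (hvn : ContDiffOn ℝ (⊤ : ℕ∞) v_n U)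
 :
    ∀ x ∈ U,
      deriv (fun t => unitN (Rt r (Vfield r v₁ v₂ v_n) t) x) 0 =
        thb r κ₁ v₁ v_n x • e₁ r x + psb r κ₂ v₂ v_n x • e₂ r x := by
  intro x hx
  have hmem : U ∈ nhds x := hU.mem_nhds hx
  have hrx : ContDiffAt ℝ (⊤ : ℕ∞) r x := hr.contDiffAt hmem
  have hane : pd1 r x ≠ 0 := hne1 x hx
  have hbne : pd2 r x ≠ 0 := hne2 x hx
  have hab : dot3 (pd1 r x) (pd2 r x) = 0 := horth x hx
  have hA1pos : (0 : ℝ) < A₁ r x := norm3_pos hane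
  have hA2pos : (0 : ℝ) < A₂ r x := norm3_pos hbne
  have hA1ne : A₁ r x ≠ 0 := hA1pos.ne'
  have hA2ne : A₂ r x ≠ 0 := hA2pos.ne'
  have haa : dot3 (pd1 r x) (pd1 r x) = A₁ r x ^ 2 := norm3_sq.symm
  have hbb : dot3 (pd2 r x) (pd2 r x) = A₂ r x ^ 2 := norm3_sq.symm
  -- smoothness at x
  have hpd1r : ContDiffAt ℝ (⊤ : ℕ∞) (fun y => fderiv ℝ r y (1, 0)) x :=
    (hrx.fderiv_right (by simp)).clm_apply contDiffAt_const
  have hpd2r : ContDiffAt ℝ (⊤ : ℕ∞) (fun y => fderiv ℝ r y (0, 1)) x :=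
    (hrx.fderiv_right (by simp)).clm_apply contDiffAt_const
  have hd1ne : dot3 (pd1 r x) (pd1 r x) ≠ 0 := (dot3_pos_of_ne hane).ne'
  have hd2ne : dot3 (pd2 r x) (pd2 r x) ≠ 0 := (dot3_pos_of_ne hbne).ne'
  have hA1 : ContDiffAt ℝ (⊤ : ℕ∞) (A₁ r) x := by
    have := (Real.contDiffAt_sqrt hd1ne).comp x (contDiffAt_dot3 hpd1r hpd1r); exact this
  have hA2 : ContDiffAt ℝ (⊤ : ℕ∞) (A₂ r) x := by
    have := (Real.contDiffAt_sqrt hd2ne).comp x (contDiffAt_dot3 hpd2r hpd2r); exact this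
  have he1 : ContDiffAt ℝ (⊤ : ℕ∞) (e₁ r) x := (hA1.inv hA1ne).smul hpd1r
  have he2 : ContDiffAt ℝ (⊤ : ℕ∞) (e₂ r) x := (hA2.inv hA2ne).smul hpd2r
  have hNN : ContDiffAt ℝ (⊤ : ℕ∞) (NN r) x := contDiffAt_cross3 he1 he2
  have hVf : ContDiffAt ℝ (⊤ : ℕ∞) (Vfield r v₁ v₂ v_n) x :=
    (((hv₁.contDiffAt hmem).smul he1).add ((hv₂.contDiffAt hmem).smul he2)).add
      ((hvn.contDiffAt hmem).smul hNN)
  have hdV : DifferentiableAt ℝ (Vfield r v₁ v₂ v_n) x := hVf.differentiableAt (by simp)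
  have hdN : DifferentiableAt ℝ (NN r) x := hNN.differentiableAt (by simp)
  have hdr : DifferentiableAt ℝ r x := hrx.differentiableAt (by simp)
  -- pointwise identity  V·N = v_n  on U
  have hVN : ∀ y ∈ U, dot3 (Vfield r v₁ v₂ v_n y) (NN r y) = v_n y := by
    intro y hy
    have hA1y : A₁ r y ≠ 0 := (norm3_pos (hne1 y hy)).ne'
    have hA2y : A₂ r y ≠ 0 := (norm3_pos (hne2 y hy)).ne'
    show dot3 (v₁ y • e₁ r y + v₂ y • e₂ r y + v_n y • cross3 (e₁ r y) (e₂ r y))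
        (cross3 (e₁ r y) (e₂ r y)) = v_n y
    rw [dot3_V_cross]
    have h11 : dot3 (e₁ r y) (e₁ r y) = 1 := by
      show dot3 ((A₁ r y)⁻¹ • pd1 r y) ((A₁ r y)⁻¹ • pd1 r y) = 1
      rw [dot3_smul_left, dot3_smul_right, show dot3 (pd1 r y) (pd1 r y) = A₁ r y ^ 2
        from norm3_sq.symm]
      field_simp
    have h22 : dot3 (e₂ r y) (e₂ r y) = 1 := by
      show dot3 ((A₂ r y)⁻¹ • pd2 r y) ((A₂ r y)⁻¹ • pd2 r y) = 1
      rw [dot3_smul_left, dot3_smul_right, show dot3 (pd2 r y) (pd2 r y) = A₂ r y ^ 2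
        from norm3_sq.symm]
      field_simp
    have h12 : dot3 (e₁ r y) (e₂ r y) = 0 := by
      show dot3 ((A₁ r y)⁻¹ • pd1 r y) ((A₂ r y)⁻¹ • pd2 r y) = 0
      rw [dot3_smul_left, dot3_smul_right, horth y hy]
      ring
    rw [h11, h22, h12]
    ring
  have hfd : fderiv ℝ (fun y => dot3 (Vfield r v₁ v₂ v_n y) (NN r y)) x = fderiv ℝ v_n x :=
    Filter.EventuallyEq.fderiv_eq (Filter.eventuallyEq_of_mem hmem hVN)
  -- dot3 (pd1 Vf x) c₀  and  dot3 (pd2 Vf x) c₀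
  have hVa : dot3 (Vfield r v₁ v₂ v_n x) (pd1 r x) = v₁ x * A₁ r x := by
    show dot3 (v₁ x • ((A₁ r x)⁻¹ • pd1 r x) + v₂ x • ((A₂ r x)⁻¹ • pd2 r x)
        + v_n x • cross3 ((A₁ r x)⁻¹ • pd1 r x) ((A₂ r x)⁻¹ • pd2 r x)) (pd1 r x) = _
    rw [dot3_V_a, hab, haa]
    field_simp
    ring
  have hVb : dot3 (Vfield r v₁ v₂ v_n x) (pd2 r x) = v₂ x * A₂ r x := by
    show dot3 (v₁ x • ((A₁ r x)⁻¹ • pd1 r x) + v₂ x • ((A₂ r x)⁻¹ • pd2 r x)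
        + v_n x • cross3 ((A₁ r x)⁻¹ • pd1 r x) ((A₂ r x)⁻¹ • pd2 r x)) (pd2 r x) = _
    rw [dot3_V_b, hab, hbb]
    field_simp
    ring
  have hNx : NN r x = ((A₁ r x)⁻¹ * (A₂ r x)⁻¹) • cross3 (pd1 r x) (pd2 r x) := by
    show cross3 ((A₁ r x)⁻¹ • pd1 r x) ((A₂ r x)⁻¹ • pd2 r x) = _
    rw [cross3_smul_smul]
  have hw1 := pdv_dot3 (1, 0) hdV hdN
  rw [show fderiv ℝ (Vfield r v₁ v₂ v_n) x (1, 0) = pd1 (Vfield r v₁ v₂ v_n) x from rfl] at hw1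
  rw [show fderiv ℝ (fun y => dot3 (Vfield r v₁ v₂ v_n y) (NN r y)) x (1, 0) = pd1 v_n x
      from by rw [hfd]; rfl] at hw1
  rw [show fderiv ℝ (NN r) x (1, 0) = pd1 (NN r) x from rfl, hN1 x hx, dot3_smul_right,
    hVa, hNx, dot3_smul_right] at hw1
  have hD1 : dot3 (pd1 (Vfield r v₁ v₂ v_n) x) (cross3 (pd1 r x) (pd2 r x))
      = A₁ r x * A₂ r x * (pd1 v_n x + κ₁ x * (v₁ x * A₁ r x)) := by
    rw [hw1]
    field_simp
    try ring
  have hw2 := pdv_dot3 (0, 1) hdV hdN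
  rw [show fderiv ℝ (Vfield r v₁ v₂ v_n) x (0, 1) = pd2 (Vfield r v₁ v₂ v_n) x from rfl] at hw2
  rw [show fderiv ℝ (fun y => dot3 (Vfield r v₁ v₂ v_n y) (NN r y)) x (0, 1) = pd2 v_n x
      from by rw [hfd]; rfl] at hw2
  rw [show fderiv ℝ (NN r) x (0, 1) = pd2 (NN r) x from rfl, hN2 x hx, dot3_smul_right,
    hVb, hNx, dot3_smul_right] at hw2
  have hD2 : dot3 (pd2 (Vfield r v₁ v₂ v_n) x) (cross3 (pd1 r x) (pd2 r x))
      = A₁ r x * A₂ r x * (pd2 v_n x + κ₂ x * (v₂ x * A₂ r x)) := by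
    rw [hw2]
    field_simp
    try ring
  -- the deformed tangents
  have hRt1 : ∀ t : ℝ, pd1 (Rt r (Vfield r v₁ v₂ v_n) t) x
      = pd1 r x + t • pd1 (Vfield r v₁ v₂ v_n) x := by
    intro t
    show fderiv ℝ (fun y => r y + t • Vfield r v₁ v₂ v_n y) x (1, 0) = _
    rw [fderiv_fun_add (g := fun y => t • Vfield r v₁ v₂ v_n y) hdr (hdV.const_smul t), fderiv_fun_const_smul hdV t]
    rfl
  have hRt2 : ∀ t : ℝ, pd2 (Rt r (Vfield r v₁ v₂ v_n) t) x
      = pd2 r x + t • pd2 (Vfield r v₁ v₂ v_n) x := by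
    intro t
    show fderiv ℝ (fun y => r y + t • Vfield r v₁ v₂ v_n y) x (0, 1) = _
    rw [fderiv_fun_add (g := fun y => t • Vfield r v₁ v₂ v_n y) hdr (hdV.const_smul t), fderiv_fun_const_smul hdV t]
    rfl
  -- the curve of normals
  set w1 := pd1 (Vfield r v₁ v₂ v_n) x with hw1def
  set w2 := pd2 (Vfield r v₁ v₂ v_n) x with hw2def
  set F : ℝ → V3 := fun t => cross3 (pd1 r x + t • w1) (pd2 r x + t • w2) with hFdef
  have hF' : HasDerivAt F (cross3 (pd1 r x) w2 + cross3 w1 (pd2 r x)) 0 :=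
    hasDerivAt_cross_aff _ _ _ _
  have hF0 : F 0 = cross3 (pd1 r x) (pd2 r x) := by
    show cross3 (pd1 r x + (0 : ℝ) • w1) (pd2 r x + (0 : ℝ) • w2) = _
    rw [zero_smul, zero_smul, add_zero, add_zero]
  have hc0ne : dot3 (F 0) (F 0) ≠ 0 := by
    rw [hF0, dot3_cross_self, haa, hbb, hab,
      show A₁ r x ^ 2 * A₂ r x ^ 2 - 0 ^ 2 = (A₁ r x * A₂ r x) ^ 2 from by ring]
    exact pow_ne_zero 2 (mul_ne_zero hA1ne hA2ne)
  have hunit := (hasDerivAt_unit F _ hF' hc0ne).deriv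
  rw [hF0] at hunit
  have hfun : (fun t => unitN (Rt r (Vfield r v₁ v₂ v_n) t) x)
      = fun t => (norm3 (F t))⁻¹ • F t := by
    funext t
    show (norm3 (cross3 (pd1 (Rt r (Vfield r v₁ v₂ v_n) t) x)
        (pd2 (Rt r (Vfield r v₁ v₂ v_n) t) x)))⁻¹ •
        cross3 (pd1 (Rt r (Vfield r v₁ v₂ v_n) t) x) (pd2 (Rt r (Vfield r v₁ v₂ v_n) t) x) = _
    rw [hRt1 t, hRt2 t]
  rw [hfun, hunit]
  -- final algebra
  have hnrm : norm3 (cross3 (pd1 r x) (pd2 r x)) = A₁ r x * A₂ r x := by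
    show Real.sqrt (dot3 (cross3 (pd1 r x) (pd2 r x)) (cross3 (pd1 r x) (pd2 r x))) = _
    rw [dot3_cross_self, haa, hbb, hab]
    rw [show A₁ r x ^ 2 * A₂ r x ^ 2 - 0 ^ 2 = (A₁ r x * A₂ r x) ^ 2 from by ring]
    exact Real.sqrt_sq (by positivity)
  rw [hnrm]
  have halg := key_alg (pd1 r x) (pd2 r x) w1 w2 hab
  have halg2 := congrArg
    (fun v : V3 => (((A₁ r x * A₂ r x) ^ 3)⁻¹ : ℝ) • v) halg
  simp only [smul_sub, smul_add, smul_smul] at halg2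
  rw [haa, hbb, hD1, hD2, sub_eq_add_neg, ← neg_smul] at halg2
  have he1x : e₁ r x = (A₁ r x)⁻¹ • pd1 r x := rfl
  have he2x : e₂ r x = (A₂ r x)⁻¹ • pd2 r x := rfl
  have hthb : thb r κ₁ v₁ v_n x = (-(pd1 v_n x) + -κ₁ x * A₁ r x * v₁ x) / A₁ r x := rfl
  have hpsb : psb r κ₂ v₂ v_n x = (-(pd2 v_n x) + -κ₂ x * A₂ r x * v₂ x) / A₂ r x := rfl
  rw [hthb, hpsb, he1x, he2x, smul_smul, smul_smul]
  rw [show (A₁ r x * A₂ r x)⁻¹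
      = ((A₁ r x * A₂ r x) ^ 3)⁻¹ * (A₁ r x ^ 2 * A₂ r x ^ 2) from by
    field_simp]
  rw [show -(dot3 (cross3 (pd1 r x) (pd2 r x)) (cross3 (pd1 r x) w2 + cross3 w1 (pd2 r x))
        / (A₁ r x * A₂ r x)) / (A₁ r x * A₂ r x) ^ 2
      = -(((A₁ r x * A₂ r x) ^ 3)⁻¹
        * dot3 (cross3 (pd1 r x) (pd2 r x)) (cross3 (pd1 r x) w2 + cross3 w1 (pd2 r x)))
      from by field_simp; try ring; exact Or.inl trivial]
  rw [smul_add, halg2]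
  congr 1
  · congr 1
    field_simp
    ring
  · congr 1
    field_simp
    ring
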